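/- Let Z be the Randers norm with Zermelo data (⟨·,·⟩, W) on a finite-dimensional real inner product space V, where ‖W‖ < 1. Suppose v ∈ V with v ≠ 0 and w̃ ∈ V with w̃ ≠ 0 are such that g_v(v,u) = ⟨w̃, u⟩ for all u ∈ V (i.e., v is the Z-gradient of a covector whose Riemannian gradient is w̃). Then (‖w̃‖ / Z(v)) · (v − Z(v)·W) = w̃. -/

import Mathlib

open scoped RealInnerProductSpace
open Classical

/-!
Away from `0` the Randers norm `Z` is smooth, and since the square root in its formula equals
`(1 - ‖W‖²) Z(x) + ⟪W,x⟫`, its derivative simplifies to `½ d(Z²)_x = ⟪G(x), ·⟫` with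
`G(x) = (Z(x)/√(⟪W,x⟫² + (1 - ‖W‖²)‖x‖²)) (x - Z(x) W)`.
Since `G` is positively homogeneous of degree one, Euler's relation turns `g_v(v, ·)`, the second
derivative of `½ Z²` at `v` in direction `v`, into `⟪G(v), ·⟫`; hence `w̃ = G(v)`. Taking norms
with `‖v - Z(v) W‖ = Z(v)` gives `‖w̃‖ / Z(v) = Z(v)/√(…)`, the coefficient of `G(v)`.
-/

/-- The Randers norm with Zermelo data `(⟪·,·⟫, W)` on a real inner product space:
`Z(0) = 0` and, for `v ≠ 0`,
`Z(v) = (√(⟪W,v⟫² + (1 − ‖W‖²)‖v‖²) − ⟪W,v⟫)/(1 − ‖W‖²)`. -/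
noncomputable def randers {V : Type*} [NormedAddCommGroup V] [InnerProductSpace ℝ V]
    (W : V) (v : V) : ℝ :=
  if v = 0 then 0
  else (Real.sqrt (⟪W, v⟫ ^ 2 + (1 - ‖W‖ ^ 2) * ‖v‖ ^ 2) - ⟪W, v⟫) / (1 - ‖W‖ ^ 2)

/-- The fundamental tensor of a (Minkowski) norm `F` at the point `v`, evaluated on the
pair of vectors `(u, w)`: one half of the second Fréchet derivative of `F²` at `v`. -/
noncomputable def fundamentalTensor {V : Type*} [NormedAddCommGroup V] [NormedSpace ℝ V]
    (F : V → ℝ) (v u w : V) : ℝ :=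
  (1 / 2) * iteratedFDeriv ℝ 2 (fun x => F x ^ 2) v ![u, w]

theorem fderiv_apply_self_of_pos_homogeneous {E F : Type*} [NormedAddCommGroup E]
    [NormedSpace ℝ E] [NormedAddCommGroup F] [NormedSpace ℝ F] {f : E → F} {v : E}
    (hf : DifferentiableAt ℝ f v) (hhom : ∀ a : ℝ, 0 < a → f (a • v) = a • f v) :
    fderiv ℝ f v v = f v := by
  have hray : HasDerivAt (fun t : ℝ => f (t • v)) (fderiv ℝ f v v) 1 := by
    rw [← one_smul ℝ v] at hf
    simpa [Function.comp_def] using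
      hf.hasFDerivAt.comp_hasDerivAt 1 ((hasDerivAt_id (1 : ℝ)).smul_const v)
  have hscale : HasDerivAt (fun t : ℝ => f (t • v)) (f v) 1 := by
    refine (((hasDerivAt_id (1 : ℝ)).smul_const (f v)).congr_of_eventuallyEq ?_).congr_deriv
      (one_smul ℝ (f v))
    filter_upwards [lt_mem_nhds one_pos] with t ht using hhom t ht
  exact hray.unique hscale

lemma one_sub_norm_sq_pos {E : Type*} [SeminormedAddGroup E] {W : E} (hW : ‖W‖ < 1) :
    0 < 1 - ‖W‖ ^ 2 := by
  nlinarith [norm_nonneg W]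

section RandersNorm

variable {V : Type*} [NormedAddCommGroup V] [InnerProductSpace ℝ V] {W : V}

noncomputable def randersRadicand (W x : V) : ℝ := ⟪W, x⟫ ^ 2 + (1 - ‖W‖ ^ 2) * ‖x‖ ^ 2

lemma randersRadicand_pos (hW : ‖W‖ < 1) {x : V} (hx : x ≠ 0) : 0 < randersRadicand W x := by
  have := mul_pos (one_sub_norm_sq_pos hW) (pow_pos (norm_pos_iff.mpr hx) 2)
  unfold randersRadicand
  positivity

lemma randersRadicand_smul (W x : V) (a : ℝ) :
    randersRadicand W (a • x) = a ^ 2 * randersRadicand W x := by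
  simp only [randersRadicand, real_inner_smul_right, norm_smul, Real.norm_eq_abs, mul_pow, sq_abs]
  ring

lemma randers_of_ne_zero (W : V) {x : V} (hx : x ≠ 0) :
    randers W x = (√(randersRadicand W x) - ⟪W, x⟫) / (1 - ‖W‖ ^ 2) :=
  if_neg hx

lemma sqrt_randersRadicand (hW : ‖W‖ < 1) {x : V} (hx : x ≠ 0) :
    √(randersRadicand W x) = (1 - ‖W‖ ^ 2) * randers W x + ⟪W, x⟫ := by
  rw [randers_of_ne_zero W hx, mul_div_cancel₀ _ (one_sub_norm_sq_pos hW).ne']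
  ring

lemma randers_pos (hW : ‖W‖ < 1) {x : V} (hx : x ≠ 0) : 0 < randers W x := by
  have hc := one_sub_norm_sq_pos hW
  have hlt : |⟪W, x⟫| < √(randersRadicand W x) := by
    rw [← Real.sqrt_sq_eq_abs]
    refine Real.sqrt_lt_sqrt (sq_nonneg _) ?_
    have := mul_pos hc (pow_pos (norm_pos_iff.mpr hx) 2)
    unfold randersRadicand
    linarith
  rw [randers_of_ne_zero W hx]
  exact div_pos (by linarith [le_abs_self ⟪W, x⟫]) hc

lemma randers_smul {a : ℝ} (ha : 0 < a) (x : V) : randers W (a • x) = a * randers W x := by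
  rcases eq_or_ne x 0 with rfl | hx
  · simp [randers]
  rw [randers_of_ne_zero W hx, randers_of_ne_zero W (smul_ne_zero ha.ne' hx),
    randersRadicand_smul, Real.sqrt_mul (sq_nonneg a), Real.sqrt_sq ha.le, real_inner_smul_right]
  ring

lemma norm_sub_randers_smul (hW : ‖W‖ < 1) (x : V) : ‖x - randers W x • W‖ = randers W x := by
  rcases eq_or_ne x 0 with rfl | hx
  · simp [randers]
  have hZ := randers_pos hW hx
  have hsq : √(randersRadicand W x) ^ 2 = randersRadicand W x :=
    Real.sq_sqrt (randersRadicand_pos hW hx).le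
  rw [sqrt_randersRadicand hW hx, randersRadicand] at hsq
  refine (sq_eq_sq₀ (norm_nonneg _) hZ.le).1 ?_
  rw [norm_sub_sq_real, real_inner_smul_right, norm_smul, Real.norm_eq_abs, abs_of_pos hZ,
    real_inner_comm]
  nlinarith [one_sub_norm_sq_pos hW]

/-- The gradient of `½ Z²` at `x ≠ 0`. -/
noncomputable def randersGrad (W x : V) : V :=
  (randers W x / √(randersRadicand W x)) • (x - randers W x • W)

lemma randersGrad_smul {a : ℝ} (ha : 0 < a) (x : V) :
    randersGrad W (a • x) = a • randersGrad W x := by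
  rw [randersGrad, randersGrad, randers_smul ha, randersRadicand_smul,
    Real.sqrt_mul (sq_nonneg a), Real.sqrt_sq ha.le, mul_div_mul_left _ _ ha.ne', mul_smul,
    ← smul_sub, smul_comm]

lemma hasFDerivAt_randersRadicand (x : V) :
    HasFDerivAt (randersRadicand W)
      (innerSL ℝ ((2 * ⟪W, x⟫) • W + (2 * (1 - ‖W‖ ^ 2)) • x)) x := by
  have hinner : HasFDerivAt (fun y : V => ⟪W, y⟫) (innerSL ℝ W) x := (innerSL ℝ W).hasFDerivAt
  refine ((hinner.pow 2).add ((hasFDerivAt_id x).norm_sq.const_mul _)).congr_fderiv ?_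
  ext u
  simp only [Nat.add_one_sub_one, pow_one, nsmul_eq_mul, Nat.cast_ofNat, id_eq,
    ContinuousLinearMap.comp_id, add_apply, smul_apply,
    coe_innerSL_apply, smul_eq_mul, map_add, map_smul]
  ring

lemma hasFDerivAt_randers (hW : ‖W‖ < 1) {x : V} (hx : x ≠ 0) :
    HasFDerivAt (randers W) (innerSL ℝ ((√(randersRadicand W x))⁻¹ • (x - randers W x • W))) x := by
  have hinner : HasFDerivAt (fun y : V => ⟪W, y⟫) (innerSL ℝ W) x := (innerSL ℝ W).hasFDerivAt
  have hformula : HasFDerivAt (fun y => (√(randersRadicand W y) - ⟪W, y⟫) / (1 - ‖W‖ ^ 2))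
      ((1 - ‖W‖ ^ 2)⁻¹ • ((1 / (2 * √(randersRadicand W x))) •
        innerSL ℝ ((2 * ⟪W, x⟫) • W + (2 * (1 - ‖W‖ ^ 2)) • x) - innerSL ℝ W)) x := by
    simpa only [div_eq_inv_mul, Pi.sub_apply] using
      (((hasFDerivAt_randersRadicand x).sqrt (randersRadicand_pos hW hx).ne').sub
        hinner).const_mul (1 - ‖W‖ ^ 2)⁻¹
  refine (hformula.congr_of_eventuallyEq ?_).congr_fderiv ?_
  · filter_upwards [eventually_ne_nhds hx] with y hy using randers_of_ne_zero W hy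
  ext u
  have hc := (one_sub_norm_sq_pos hW).ne'
  have hs := (Real.sqrt_pos.2 (randersRadicand_pos hW hx)).ne'
  simp only [one_div, mul_inv_rev, map_add, map_smul, smul_add, smul_apply, sub_apply, add_apply,
    coe_innerSL_apply, smul_eq_mul, map_sub]
  field_simp
  rw [sqrt_randersRadicand hW hx]
  ring

lemma hasFDerivAt_randers_sq (hW : ‖W‖ < 1) {x : V} (hx : x ≠ 0) :
    HasFDerivAt (fun y => randers W y ^ 2) (innerSL ℝ ((2 : ℝ) • randersGrad W x)) x := by
  refine ((hasFDerivAt_randers hW hx).pow 2).congr_fderiv ?_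
  ext u
  simp only [Nat.add_one_sub_one, pow_one, nsmul_eq_mul, Nat.cast_ofNat, map_smul, map_sub,
    smul_apply, sub_apply, coe_innerSL_apply, smul_eq_mul,
    randersGrad]
  ring

lemma differentiableAt_randersGrad (hW : ‖W‖ < 1) {x : V} (hx : x ≠ 0) :
    DifferentiableAt ℝ (randersGrad W) x := by
  have hZ := (hasFDerivAt_randers hW hx).differentiableAt
  have hs : DifferentiableAt ℝ (fun y => √(randersRadicand W y)) x :=
    (hasFDerivAt_randersRadicand x).differentiableAt.sqrt (randersRadicand_pos hW hx).ne'
  change DifferentiableAt ℝ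
    (fun y => (randers W y * (√(randersRadicand W y))⁻¹) • (y - randers W y • W)) x
  exact (hZ.mul (hs.fun_inv (Real.sqrt_pos.2 (randersRadicand_pos hW hx)).ne')).smul
    ((differentiableAt_id (x := x)).sub (hZ.smul_const W))

lemma fundamentalTensor_randers_self_left (hW : ‖W‖ < 1) {v : V} (hv : v ≠ 0) (u : V) :
    fundamentalTensor (randers W) v v u = ⟪randersGrad W v, u⟫ := by
  have hderiv : fderiv ℝ (fun y => randers W y ^ 2) =ᶠ[nhds v]
      fun x => innerSL ℝ ((2 : ℝ) • randersGrad W x) := by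
    filter_upwards [eventually_ne_nhds hv] with x hx using (hasFDerivAt_randers_sq hW hx).fderiv
  have heuler := fderiv_apply_self_of_pos_homogeneous
    (f := fun x => innerSL ℝ ((2 : ℝ) • randersGrad W x))
    ((innerSL ℝ).differentiableAt.comp v ((differentiableAt_randersGrad hW hv).const_smul 2))
    fun a ha => by rw [randersGrad_smul ha, smul_comm (2 : ℝ) a, map_smul]
  rw [fundamentalTensor, iteratedFDeriv_two_apply]
  simp only [Matrix.cons_val_zero, Matrix.cons_val_one, hderiv.fderiv_eq]
  rw [heuler]
  simp

lemma norm_randersGrad (hW : ‖W‖ < 1) {x : V} (hx : x ≠ 0) :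
    ‖randersGrad W x‖ = randers W x ^ 2 / √(randersRadicand W x) := by
  rw [randersGrad, norm_smul, norm_sub_randers_smul hW, Real.norm_eq_abs,
    abs_of_nonneg (div_nonneg (randers_pos hW hx).le (Real.sqrt_nonneg _))]
  ring

end RandersNorm

theorem randers_gradient_relation_general {V : Type*} [NormedAddCommGroup V]
    [InnerProductSpace ℝ V] (W : V) (hW : ‖W‖ < 1)
    (v : V) (hv : v ≠ 0) (wt : V)
    (hgrad : ∀ u : V, fundamentalTensor (randers W) v v u = ⟪wt, u⟫) :
    (‖wt‖ / randers W v) • (v - randers W v • W) = wt := by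
  obtain rfl : randersGrad W v = wt :=
    ext_inner_right ℝ fun u => by rw [← hgrad, fundamentalTensor_randers_self_left hW hv]
  rw [norm_randersGrad hW hv, randersGrad, sq, mul_div_assoc, mul_div_cancel_left₀ _
    (randers_pos hW hv).ne']

/-- If `v ≠ 0` is the `Z`-gradient of the covector `⟪w̃, ·⟫` with `w̃ ≠ 0` (that is,
`g_v(v,u) = ⟪w̃,u⟫` for all `u`), then `(‖w̃‖/Z(v)) · (v − Z(v) W) = w̃`. -/
theorem randers_gradient_relation {V : Type*} [NormedAddCommGroup V]
    [InnerProductSpace ℝ V] [FiniteDimensional ℝ V] (W : V) (hW : ‖W‖ < 1)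
    (v : V) (hv : v ≠ 0) (wt : V) (hwt : wt ≠ 0)
    (hgrad : ∀ u : V, fundamentalTensor (randers W) v v u = ⟪wt, u⟫) :
    (‖wt‖ / randers W v) • (v - randers W v • W) = wt :=
  randers_gradient_relation_general W hW v hv wt hgrad
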